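/- Let L = (𝔬_{E,f}, 𝒩). Then L ⊕ −L is represented by a reduced form of GK type (a, σ), where: (1) if E/F is unramified, (a, σ) = ((0,0,0,0), (12)(34)) if f = 0; ((0, f, f, 2f), (14)(23)) if 0 < f < 2e; ((0, 2e, 2f−2e, 2f), (12)(34)) if f ≥ 2e. (2) If E/F is ramified with d = 2g ≤ 2e, (a, σ) = ((0, 2f+1, 2g−1, 2g+2f), (14)(23)) if 0 ≤ f ≤ g−1; ((0, g+f, g+f, 2g+2f), (14)(23)) if g ≤ f < 2e−g; ((0, 2e, 2g+2f−2e, 2g+2f), (12)(34)) if f ≥ 2e−g. (3) If E/F is ramified with d = 2e+1, (a, σ) = ((0, 2f+1, 2e, 2e+2f+1), (13)(24)) if 0 ≤ f < e; ((0, 2e, 2f+1, 2e+2f+1), (12)(34)) if f ≥ e. -/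

import Mathlib

open scoped Classical

noncomputable section

namespace GK

variable {F : Type} [Field F]

/-- The axioms making `(F, O, ord)` a nonarchimedean local field of characteristic zero
(i.e. a finite extension of `ℚ_p`): `ord` is a surjective discrete valuation, `O` is its
valuation ring, the residue field is finite of cardinality `q` and of characteristic `p`,
and `O` is complete. -/
structure LocalFieldAxioms (O : Subring F) (ord : F → ℤ) (p q : ℕ) : Prop where
  ord_mul : ∀ x y : F, x ≠ 0 → y ≠ 0 → ord (x * y) = ord x + ord y
  min_le_ord_add : ∀ x y : F, x ≠ 0 → y ≠ 0 → x + y ≠ 0 → min (ord x) (ord y) ≤ ord (x + y)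
  ord_surjective : ∀ k : ℤ, ∃ x : F, x ≠ 0 ∧ ord x = k
  mem_integers : ∀ x : F, x ∈ O ↔ x = 0 ∨ 0 ≤ ord x
  charZero : CharZero F
  p_prime : Nat.Prime p
  ord_p_pos : 0 < ord (p : F)
  residue_card : ∃ S : Finset F, S.card = q ∧ (∀ x ∈ S, x ∈ O) ∧
    (∀ x : F, x ∈ O → ∃ y ∈ S, x - y = 0 ∨ 1 ≤ ord (x - y)) ∧
    ∀ y ∈ S, ∀ z ∈ S, (y - z = 0 ∨ 1 ≤ ord (y - z)) → y = z
  complete : ∀ x : ℕ → F, (∀ k, x k ∈ O) →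
    (∀ k : ℕ, x (k+1) - x k = 0 ∨ (k : ℤ) ≤ ord (x (k+1) - x k)) →
    ∃ L : F, L ∈ O ∧ ∀ k : ℕ, x k - L = 0 ∨ (k : ℤ) ≤ ord (x k - L)

/-- `x` lies in `c • O`. -/
def MemScale (O : Subring F) (c x : F) : Prop := ∃ w, w ∈ O ∧ x = c * w

/-- A half-integral symmetric matrix: symmetric, integral diagonal, and
twice every entry is integral. -/
def HalfIntegral (O : Subring F) {n : ℕ} (B : Matrix (Fin n) (Fin n) F) : Prop :=
  B.IsSymm ∧ (∀ i, B i i ∈ O) ∧ ∀ i j, 2 * B i j ∈ O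

/-- `U ∈ GLₙ(O)`: entries in `O` and determinant a unit of `O`. -/
def IsGLO (O : Subring F) (ord : F → ℤ) {n : ℕ} (U : Matrix (Fin n) (Fin n) F) : Prop :=
  (∀ i j, U i j ∈ O) ∧ U.det ≠ 0 ∧ ord U.det = 0

/-- `GLₙ(O)`-equivalence of matrices: `B' = ᵗU · B · U`. -/
def EquivO (O : Subring F) (ord : F → ℤ) {n : ℕ} (B B' : Matrix (Fin n) (Fin n) F) : Prop :=
  ∃ U : Matrix (Fin n) (Fin n) F, IsGLO O ord U ∧ B' = U.transpose * B * U

/-- `a ∈ S(B)` : a non-decreasing sequence of naturals with `ord (B i i) ≥ a i` and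
`ord (2 B i j) ≥ (a i + a j)/2`. -/
def InS (ord : F → ℤ) {n : ℕ} (B : Matrix (Fin n) (Fin n) F) (a : Fin n → ℕ) : Prop :=
  Monotone a ∧ (∀ i, B i i = 0 ∨ (a i : ℤ) ≤ ord (B i i)) ∧
    ∀ i j, 2 * B i j = 0 ∨ (a i : ℤ) + (a j : ℤ) ≤ 2 * ord (2 * B i j)

/-- The union of the `S(ᵗU·B·U)` over all `U ∈ GLₙ(O)`. -/
def GKSet (O : Subring F) (ord : F → ℤ) {n : ℕ} (B : Matrix (Fin n) (Fin n) F) :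
    Set (Fin n → ℕ) :=
  {a | ∃ B', EquivO O ord B B' ∧ InS ord B' a}

/-- Lexicographic comparison of sequences. -/
def LexLE {n : ℕ} (a b : Fin n → ℕ) : Prop :=
  a = b ∨ ∃ k, (∀ j, j < k → a j = b j) ∧ a k < b k

/-- `a` is the Gross–Keating invariant of `B` : the lexicographically greatest
element of `⋃_U S(ᵗU·B·U)`. -/
def IsGK (O : Subring F) (ord : F → ℤ) {n : ℕ} (B : Matrix (Fin n) (Fin n) F)
    (a : Fin n → ℕ) : Prop :=
  a ∈ GKSet O ord B ∧ ∀ b ∈ GKSet O ord B, LexLE b a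

/-- Orthogonal (block diagonal) sum of two square matrices. -/
def orthSum {m k : ℕ} (A : Matrix (Fin m) (Fin m) F) (B : Matrix (Fin k) (Fin k) F) :
    Matrix (Fin (m + k)) (Fin (m + k)) F :=
  Matrix.reindex finSumFinEquiv finSumFinEquiv (Matrix.fromBlocks A 0 0 B)

/-- The congruence condition `ᵗX·B·X − B ∈ 𝔭^N · ℋₙ(𝔬)` for a matrix `X` with
entries in `O`. -/
def DensCond (O : Subring F) (ord : F → ℤ) {n : ℕ}
    (B X : Matrix (Fin n) (Fin n) F) (N : ℕ) : Prop :=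
  (∀ i j, X i j ∈ O) ∧
  (∀ i, (X.transpose * B * X - B) i i = 0 ∨
      (N : ℤ) ≤ ord ((X.transpose * B * X - B) i i)) ∧
  ∀ i j, 2 * (X.transpose * B * X - B) i j = 0 ∨
      (N : ℤ) ≤ ord (2 * (X.transpose * B * X - B) i j)

/-- The number of solutions `X ∈ Mₙ(𝔬/𝔭^N)` of `ᵗX·B·X ≡ B mod 𝔭^N ℋₙ(𝔬)`,
counted as residue classes mod `𝔭^N` of integral matrix solutions. -/
def densCount (O : Subring F) (ord : F → ℤ) {n : ℕ}
    (B : Matrix (Fin n) (Fin n) F) (N : ℕ) : ℕ :=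
  Nat.card (Quot (fun X Y : {X : Matrix (Fin n) (Fin n) F // DensCond O ord B X N} =>
    ∀ i j, X.1 i j - Y.1 i j = 0 ∨ (N : ℤ) ≤ ord (X.1 i j - Y.1 i j)))

/-- `β` is the local density `β(L)` of the quadratic lattice with Gram matrix `B`:
`β = (1/2)·(q^N)^{-n(n-1)/2} · #{X ∈ Mₙ(𝔬/𝔭^N) : ᵗX·B·X ≡ B}` for all large `N`. -/
def IsLocalDensity (O : Subring F) (ord : F → ℤ) (q : ℕ) {n : ℕ}
    (B : Matrix (Fin n) (Fin n) F) (β : ℝ) : Prop :=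
  ∃ N₀ : ℕ, ∀ N ≥ N₀,
    β = (1/2) * (densCount O ord B N : ℝ) / ((q : ℝ) ^ (N * (n * (n-1) / 2)))

/-- A unimodular (Gram) matrix: integral entries and unit determinant. -/
def IsUnimodularMat (O : Subring F) (ord : F → ℤ) {ι : Type} [Fintype ι] [DecidableEq ι]
    (C : Matrix ι ι F) : Prop :=
  (∀ i j, C i j ∈ O) ∧ C.det ≠ 0 ∧ ord C.det = 0

/-- `C` is `π^i`-modular. -/
def IsModularMat (O : Subring F) (ord : F → ℤ) (π : F) {ι : Type} [Fintype ι] [DecidableEq ι]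
    (C : Matrix ι ι F) (i : ℤ) : Prop :=
  IsUnimodularMat O ord (π ^ (-i) • C)

/-- `B` is (the Gram matrix of) a Jordan splitting, the block of level `i`
consisting of the indices `s` with `m s = i`, and being `π^i`-modular. -/
def IsJordanMatrix (O : Subring F) (ord : F → ℤ) (π : F) {n : ℕ}
    (B : Matrix (Fin n) (Fin n) F) (m : Fin n → ℤ) : Prop :=
  (∀ s t, m s ≠ m t → B s t = 0) ∧
  ∀ i : ℤ, (∃ s, m s = i) →
    IsModularMat O ord π
      (B.submatrix (fun s : {s : Fin n // m s = i} => (s : Fin n))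
        (fun s : {s : Fin n // m s = i} => (s : Fin n))) i

/-- The `π^i`-modular Jordan component of the lattice with Gram matrix `B` is nonzero. -/
def HasJordanComponent (O : Subring F) (ord : F → ℤ) (π : F) {n : ℕ}
    (B : Matrix (Fin n) (Fin n) F) (i : ℤ) : Prop :=
  ∃ (B' : Matrix (Fin n) (Fin n) F) (m : Fin n → ℤ),
    EquivO O ord B B' ∧ IsJordanMatrix O ord π B' m ∧ ∃ s, m s = i

/-- number of indices in the level `i` Jordan block. -/
def jordanRank {n : ℕ} (m : Fin n → ℤ) (i : ℤ) : ℕ :=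
  (Finset.univ.filter fun s => m s = i).card

/-- The level `i` Jordan constituent of the Jordan matrix `B` has parity type I,
i.e. its norm ideal is all of `O` (some normalized diagonal entry is a unit). -/
def JordanTypeI (ord : F → ℤ) (π : F) {n : ℕ}
    (B : Matrix (Fin n) (Fin n) F) (m : Fin n → ℤ) (i : ℤ) : Prop :=
  ∃ s, m s = i ∧ π ^ (-i) * B s s ≠ 0 ∧ ord (π ^ (-i) * B s s) = 0

/-- The sublattice `L ∩ π^i L♯ = {x ∈ 𝔬ⁿ : ⟨x, L⟩ ⊆ π^i 𝔬}` of the lattice with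
Gram matrix `B`. -/
def DualCapLattice (O : Subring F) (π : F) {n : ℕ}
    (B : Matrix (Fin n) (Fin n) F) (i : ℤ) : Set (Fin n → F) :=
  {x | (∀ s, x s ∈ O) ∧ ∀ s, MemScale O (π ^ i) (B.mulVec x s)}

/-- `C` is a Gram matrix of the quadratic lattice `(L ∩ π^i L♯, π^{-i} Q)`. -/
def IsGramOfDualCap (O : Subring F) (π : F) {n : ℕ}
    (B : Matrix (Fin n) (Fin n) F) (i : ℤ) (C : Matrix (Fin n) (Fin n) F) : Prop :=
  ∃ W : Matrix (Fin n) (Fin n) F, W.det ≠ 0 ∧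
    (∀ t, (fun s => W s t) ∈ DualCapLattice O π B i) ∧
    (∀ x ∈ DualCapLattice O π B i, ∃ c : Fin n → F, (∀ t, c t ∈ O) ∧ x = W.mulVec c) ∧
    C = π ^ (-i) • (W.transpose * B * W)

/-- `σ` is an `a`-admissible involution (Ikeda–Katsurada). -/
def IsAdmissible {n : ℕ} (a : Fin n → ℕ) (σ : Fin n → Fin n) : Prop :=
  Monotone a ∧
  (∀ i, σ (σ i) = i) ∧
  -- `#P⁰ ≤ 2`
  (∀ i j k, σ i = i → σ j = j → σ k = k → i = j ∨ i = k ∨ j = k) ∧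
  -- distinct fixed points have values of different parities
  (∀ i j, σ i = i → σ j = j → i ≠ j → a i % 2 ≠ a j % 2) ∧
  -- maximality condition at fixed points
  (∀ i, σ i = i → ∀ j, (σ j = j ∨ a (σ j) < a j) → a j % 2 = a i % 2 → a j ≤ a i) ∧
  -- at most one element of `P⁺` in each block
  (∀ i j, a i = a j → a (σ i) < a i → a (σ j) < a j → i = j) ∧
  -- at most one element of `P⁻ ∪ P⁰` in each block
  (∀ i j, a i = a j → (a i < a (σ i) ∨ σ i = i) → (a j < a (σ j) ∨ σ j = j) → i = j) ∧
  -- the matching conditions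
  (∀ i, a i < a (σ i) → a (σ i) % 2 = a i % 2 ∧
    ∀ j, a (σ j) < a j → a i < a j → a j % 2 = a i % 2 → a (σ i) ≤ a j) ∧
  ∀ i, a (σ i) < a i →
    ∀ j, a j < a (σ j) → a j < a i → a j % 2 = a i % 2 → a j ≤ a (σ i)

/-- `B` is a reduced form of GK type `(a, σ)` (Ikeda–Katsurada). -/
def IsReducedForm (O : Subring F) (ord : F → ℤ) {n : ℕ}
    (B : Matrix (Fin n) (Fin n) F) (a : Fin n → ℕ) (σ : Fin n → Fin n) : Prop :=
  HalfIntegral O B ∧ B.det ≠ 0 ∧ InS ord B a ∧ IsAdmissible a σ ∧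
  (∀ i, σ i ≠ i → 2 * B i (σ i) ≠ 0 ∧ 2 * ord (2 * B i (σ i)) = (a i : ℤ) + (a (σ i) : ℤ)) ∧
  (∀ i, (σ i = i ∨ a i < a (σ i)) → B i i ≠ 0 ∧ ord (B i i) = (a i : ℤ)) ∧
  ∀ i j, j ≠ i → j ≠ σ i → 2 * B i j = 0 ∨ (a i : ℤ) + (a j : ℤ) < 2 * ord (2 * B i j)

/-- `D` is a nonzero square of `F`. -/
def IsSquareNZ (D : F) : Prop := ∃ c : F, c ≠ 0 ∧ D = c * c

/-- `F(√D)/F` is unramified (possibly trivial): `D` times a square is of the form `1 + 4t`,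
`t ∈ O`. -/
def UnramSqrt (O : Subring F) (D : F) : Prop :=
  ∃ c t : F, c ≠ 0 ∧ t ∈ O ∧ D * (c * c) = 1 + 4 * t

/-- `ζ = ξ_B` for a (nondegenerate) even-size half-integral `B`. -/
def XiIs (O : Subring F) {n : ℕ} (B : Matrix (Fin n) (Fin n) F) (ζ : ℤ) : Prop :=
  (IsSquareNZ ((-4 : F) ^ (n / 2) * B.det) ∧ ζ = 1) ∨
  (¬ IsSquareNZ ((-4 : F) ^ (n / 2) * B.det) ∧
    UnramSqrt O ((-4 : F) ^ (n / 2) * B.det) ∧ ζ = -1) ∨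
  (¬ IsSquareNZ ((-4 : F) ^ (n / 2) * B.det) ∧
    ¬ UnramSqrt O ((-4 : F) ^ (n / 2) * B.det) ∧ ζ = 0)

/-- the columns of `W` span a totally isotropic subspace for `B`. -/
def IsIsotropicSub {n k : ℕ} (B : Matrix (Fin n) (Fin n) F)
    (W : Matrix (Fin n) (Fin k) F) : Prop :=
  (∀ c : Fin k → F, W.mulVec c = 0 → c = 0) ∧ ∀ s t, (W.transpose * B * W) s t = 0

/-- `(Fⁿ, B)` is split: it has a totally isotropic subspace of dimension `⌊n/2⌋`. -/
def SplitSpace {n : ℕ} (B : Matrix (Fin n) (Fin n) F) : Prop :=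
  ∃ W : Matrix (Fin n) (Fin (n / 2)) F, IsIsotropicSub B W

/-- `ζ = η_B` for an odd-size nondegenerate `B`. -/
def EtaIs {n : ℕ} (B : Matrix (Fin n) (Fin n) F) (ζ : ℤ) : Prop :=
  (SplitSpace B ∧ ζ = 1) ∨ (¬ SplitSpace B ∧ ζ = -1)

/-- An extended Gross–Keating datum `(n₁,…,n_r; m₁,…,m_r; ζ₁,…,ζ_r)`. -/
def EGKDatum : Type := Σ r : ℕ, (Fin r → ℕ) × (Fin r → ℕ) × (Fin r → ℤ)

/-- leading principal `k × k` submatrix. -/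
def leadBlock {n : ℕ} (B : Matrix (Fin n) (Fin n) F) (k : ℕ) (h : k ≤ n) :
    Matrix (Fin k) (Fin k) F :=
  B.submatrix (Fin.castLE h) (Fin.castLE h)

/-- `dat = (n₁,…,n_r; m₁,…,m_r; ζ₁,…,ζ_r)` is the extended GK datum of the reduced
form `B` with `GK(B) = a`. -/
def IsEGKOfReduced (O : Subring F) {n : ℕ} (B : Matrix (Fin n) (Fin n) F)
    (a : Fin n → ℕ) (dat : EGKDatum) : Prop :=
  StrictMono dat.2.2.1 ∧
  (∀ s, 0 < dat.2.1 s) ∧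
  (∀ t : Fin n, ∃ s, a t = dat.2.2.1 s) ∧
  (∀ s, (Finset.univ.filter fun t => a t = dat.2.2.1 s).card = dat.2.1 s) ∧
  ∀ s : Fin dat.1,
    ∃ h : (∑ u ∈ Finset.univ.filter (fun u => u ≤ s), dat.2.1 u) ≤ n,
      ((∑ u ∈ Finset.univ.filter (fun u => u ≤ s), dat.2.1 u) % 2 = 0 →
        XiIs O (leadBlock B _ h) (dat.2.2.2 s)) ∧
      ((∑ u ∈ Finset.univ.filter (fun u => u ≤ s), dat.2.1 u) % 2 = 1 →
        EtaIs (leadBlock B _ h) (dat.2.2.2 s))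

/-- `dat` is the extended GK datum of (the lattice with Gram matrix) `B`. -/
def IsEGK (O : Subring F) (ord : F → ℤ) {n : ℕ} (B : Matrix (Fin n) (Fin n) F)
    (dat : EGKDatum) : Prop :=
  ∃ (B' : Matrix (Fin n) (Fin n) F) (a : Fin n → ℕ) (σ : Fin n → Fin n),
    EquivO O ord B B' ∧ IsReducedForm O ord B' a σ ∧ IsEGKOfReduced O B' a dat

/-- `dat` is the truncated extended GK datum `EGK(B)^{≤1}`: the EGK datum of the
upper-left block (of size the number of GK entries `≤ 1`) of a reduced form
equivalent to `B`. -/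
def IsEGKle1 (O : Subring F) (ord : F → ℤ) {n : ℕ} (B : Matrix (Fin n) (Fin n) F)
    (dat : EGKDatum) : Prop :=
  ∃ (B' : Matrix (Fin n) (Fin n) F) (a : Fin n → ℕ) (σ : Fin n → Fin n)
    (h : (Finset.univ.filter fun t => a t ≤ 1).card ≤ n),
    EquivO O ord B B' ∧ IsReducedForm O ord B' a σ ∧
    IsEGK O ord (leadBlock B' _ h) dat

/-- truncated EGK datum computed from a given reduced form `B` itself. -/
def TruncEGKOfReduced (O : Subring F) (ord : F → ℤ) {n : ℕ}
    (B : Matrix (Fin n) (Fin n) F) (dat : EGKDatum) : Prop :=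
  ∃ (a : Fin n → ℕ) (σ : Fin n → Fin n)
    (h : (Finset.univ.filter fun t => a t ≤ 1).card ≤ n),
    IsReducedForm O ord B a σ ∧ IsEGK O ord (leadBlock B _ h) dat

/-- `c` is the non-decreasing rearrangement of the concatenation of `a` and `b`. -/
def IsMergeOf {m k n : ℕ} (a : Fin m → ℕ) (b : Fin k → ℕ) (c : Fin n → ℕ) : Prop :=
  Monotone c ∧ ∃ φ : (Fin m ⊕ Fin k) ≃ Fin n, ∀ x, c (φ x) = Sum.elim a b x

/-- the value `Q(x) = ᵗx·C·x` of the quadratic form with Gram matrix `C`. -/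
def Qval {n : ℕ} (C : Matrix (Fin n) (Fin n) F) (x : Fin n → F) : F :=
  dotProduct x (C.mulVec x)

/-- the sublattice `B(A)` of `A = 𝔬ⁿ`: integral vectors with `Q(x) ∈ 2𝔬`. -/
def BAset (O : Subring F) {n : ℕ} (C : Matrix (Fin n) (Fin n) F) : Set (Fin n → F) :=
  {x | (∀ s, x s ∈ O) ∧ MemScale O 2 (Qval C x)}

/-- membership in the sublattice `Z(A)`: the radical of the quadratic form
`(1/2)Q mod 2` on `B(A)/2A`. -/
def InZA (O : Subring F) {n : ℕ} (C : Matrix (Fin n) (Fin n) F) (x : Fin n → F) : Prop :=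
  x ∈ BAset O C ∧ MemScale O 4 (Qval C x) ∧
    ∀ y ∈ BAset O C, MemScale O 2 (dotProduct x (C.mulVec y))

/-- the cardinality of the residue space `V̄ = B(A)/Z(A)`. -/
def residueSpaceCard (O : Subring F) {n : ℕ} (C : Matrix (Fin n) (Fin n) F) : ℕ :=
  Nat.card (Quot (fun x y : (BAset O C : Set (Fin n → F)) => InZA O C (x.1 - y.1)))

/-- the norm ideal of the lattice with Gram matrix `C` is all of `𝔬`. -/
def NormUnit (O : Subring F) (ord : F → ℤ) {n : ℕ} (C : Matrix (Fin n) (Fin n) F) : Prop :=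
  ∃ x : Fin n → F, (∀ s, x s ∈ O) ∧ Qval C x ≠ 0 ∧ ord (Qval C x) = 0

/-- the residue quadratic form `q̄` on `V̄ = B(A)/Z(A)` is split: `V̄` has even
dimension `2k` and carries a totally isotropic subspace of dimension `k`. -/
def ResidueSplit (O : Subring F) (ord : F → ℤ) (q : ℕ) {n : ℕ}
    (C : Matrix (Fin n) (Fin n) F) : Prop :=
  ∃ k : ℕ, residueSpaceCard O C = q ^ (2 * k) ∧
    ∃ vs : Fin k → (Fin n → F),
      (∀ t, vs t ∈ BAset O C) ∧
      (∀ t, MemScale O 4 (Qval C (vs t))) ∧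
      (∀ s t, MemScale O 2 (dotProduct (vs s) (C.mulVec (vs t)))) ∧
      ∀ c : Fin k → F, (∀ t, c t ∈ O) → (∃ t, c t ≠ 0 ∧ ord (c t) = 0) →
        ¬ InZA O C (∑ t, c t • vs t)

/-- a square matrix over `F` of some size. -/
def SqB (F : Type) [Field F] : Type := (k : ℕ) × Matrix (Fin k) (Fin k) F

/-- total size of a list of square matrices. -/
def dims : List (SqB F) → ℕ
  | [] => 0
  | a :: t => a.1 + dims t

/-- orthogonal sum of a list of square matrices. -/
def listSum : (l : List (SqB F)) → Matrix (Fin (dims l)) (Fin (dims l)) F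
  | [] => 0
  | a :: t => orthSum a.2 (listSum t)

/-- a `2×2` block `2^i·[[2a, u],[u, 2b]]` with `a, b ∈ 𝔬`, `u ∈ 𝔬ˣ`. -/
def IsDagBlock (O : Subring F) (ord : F → ℤ) (π : F) (i : ℤ) (blk : SqB F) : Prop :=
  ∃ a u b : F, a ∈ O ∧ b ∈ O ∧ u ∈ O ∧ u ≠ 0 ∧ ord u = 0 ∧
    blk = ⟨2, π ^ i • !![2*a, u; u, 2*b]⟩

/-- The data of a semisimple quadratic `F`-algebra `E` (a quadratic field extension or
`F × F`), together with a generator `ω` of its maximal order `𝔬_E = 𝔬 + 𝔬ω`,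
the valuation `d` of the discriminant of `E/F`, and the invariant `ξ`. -/
structure QuadAlgebraAxioms (O : Subring F) (ord : F → ℤ)
    (E : Type) [CommRing E] [Algebra F E] (ω : E) (d : ℕ) (ξ : ℤ) : Prop where
  finrank_two : Module.finrank F E = 2
  reduced : ∀ x : E, x * x = 0 → x = 0
  indep : ∀ a b : F, algebraMap F E a + algebraMap F E b * ω = 0 → a = 0 ∧ b = 0
  trace_mem : Algebra.trace F E ω ∈ O
  norm_mem : Algebra.norm F ω ∈ O
  max_order : ∀ x : E, Algebra.trace F E x ∈ O → Algebra.norm F x ∈ O →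
    ∃ a b : F, a ∈ O ∧ b ∈ O ∧ x = algebraMap F E a + algebraMap F E b * ω
  disc_ne : (Algebra.trace F E ω) ^ 2 - 4 * Algebra.norm F ω ≠ 0
  disc_ord : ord ((Algebra.trace F E ω) ^ 2 - 4 * Algebra.norm F ω) = d
  xi_def : ξ = if (∃ x : E, x * x = x ∧ x ≠ 0 ∧ x ≠ 1) then 1 else if d = 0 then -1 else 0

/-- Gram matrix of the norm form on the order `𝔬_{E,f} = 𝔬 + 𝔬·ϖ^f ω` of conductor `f`,
with respect to the basis `(1, ϖ^f ω)`; here `T = tr(ω)` and `S = N(ω)`. -/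
def normGram (π T S : F) (f : ℕ) : Matrix (Fin 2) (Fin 2) F :=
  !![1, π ^ f * T / 2; π ^ f * T / 2, π ^ (2 * f) * S]

/-- the order `𝔬_{E,f} = 𝔬 + 𝔭^f 𝔬_E`, as a subset of `E`. -/
def orderSet (O : Subring F) (π : F) {E : Type} [CommRing E] [Algebra F E]
    (ω : E) (f : ℕ) : Set E :=
  {x | ∃ a b : F, a ∈ O ∧ b ∈ O ∧ x = algebraMap F E a + algebraMap F E (b * π ^ f) * ω}

/-- the set `V_N = {α ∈ 𝔬_{E,f} : 𝒩(α) ≡ 1 mod 𝔭^N}`. -/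
def normOneSet (O : Subring F) (ord : F → ℤ) (π : F) {E : Type} [CommRing E] [Algebra F E]
    (ω : E) (f N : ℕ) : Set E :=
  {x ∈ orderSet O π ω f |
    Algebra.norm F x - 1 = 0 ∨ (N : ℤ) ≤ ord (Algebra.norm F x - 1)}

/-- a rank‑2 lattice Gram matrix is indecomposable: not `GL₂(𝔬)`-equivalent to an
orthogonal sum of two rank‑1 lattices. -/
def Indecomposable2 (O : Subring F) (ord : F → ℤ) (G : Matrix (Fin 2) (Fin 2) F) : Prop :=
  ¬ ∃ B' : Matrix (Fin 2) (Fin 2) F, EquivO O ord G B' ∧ B' 0 1 = 0 ∧ B' 1 0 = 0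

/-!
In the basis `(1, ϖ^f ω)` the lattice `L` has Gram matrix `[[1, β], [β, s]]` with
`β = ϖ^f T / 2` and `s = ϖ^{2f} S`, where `T = tr ω` and `S = 𝒩 ω`. Replacing `ω` by `ω - m`,
`m ∈ 𝔬`, replaces `(T, S)` by `(T - 2m, 𝒩(ω - m))` without changing `𝔬_{E,f}`. An explicit
unimodular change of basis carries `L ⊕ -L` to one of four matrices `shapeA`, …, `shapeD`,
whose entries are `0`, `1`, `β`, `s` and `s - β² = -ϖ^{2f} (T² - 4S) / 4`, so the GK type can be
read off from `ord T`, `ord S` and `d = ord (T² - 4S)`.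

If `d = 0`, then `T` is a unit. If `d > 0`, then `T ∈ 𝔭`; choosing `m` with `m² ≡ -S mod 𝔭`
(squaring is bijective on the residue field, of characteristic 2) and using the maximality of
`𝔬_E` gives `ord 𝒩(ω - m) = 1`. Then `(T - 2m)² = (T² - 4S) + 4 𝒩(ω - m)` gives
`ord (T - 2m) = g` when `d = 2g ≤ 2e`, and `ord (T - 2m) > e` when `d = 2e + 1`.
-/

open scoped Matrix

variable {O : Subring F} {ord : F → ℤ} {p q : ℕ}

/-- `x ∈ 𝔭 ^ k`; the disjunct `x = 0` stands in for the convention `ord 0 = ∞`. -/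
def OrdGE (ord : F → ℤ) (x : F) (k : ℤ) : Prop := x = 0 ∨ k ≤ ord x

lemma OrdGE.mono {x : F} {k l : ℤ} (hx : OrdGE ord x k) (hlk : l ≤ k) : OrdGE ord x l :=
  hx.imp_right hlk.trans

namespace LocalFieldAxioms

variable (hF : LocalFieldAxioms O ord p q)
include hF

lemma two_ne_zero : (2 : F) ≠ 0 := by
  have := hF.charZero
  exact _root_.two_ne_zero

lemma ord_one : ord (1 : F) = 0 := by
  have h := hF.ord_mul 1 1 one_ne_zero one_ne_zero
  rw [mul_one] at h
  omega

lemma ord_neg {x : F} (hx : x ≠ 0) : ord (-x) = ord x := by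
  have h := hF.ord_mul (-1) (-1) (by norm_num) (by norm_num)
  rw [neg_mul_neg, one_mul, hF.ord_one] at h
  rw [← neg_one_mul, hF.ord_mul _ _ (by norm_num) hx]
  omega

lemma ord_inv {x : F} (hx : x ≠ 0) : ord x⁻¹ = -ord x := by
  have h := hF.ord_mul x x⁻¹ hx (inv_ne_zero hx)
  rw [mul_inv_cancel₀ hx, hF.ord_one] at h
  omega

lemma ord_div {x y : F} (hx : x ≠ 0) (hy : y ≠ 0) : ord (x / y) = ord x - ord y := by
  rw [div_eq_mul_inv, hF.ord_mul x y⁻¹ hx (inv_ne_zero hy), hF.ord_inv hy, sub_eq_add_neg]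

lemma ord_pow {x : F} (hx : x ≠ 0) (n : ℕ) : ord (x ^ n) = n * ord x := by
  induction n with
  | zero => simpa using hF.ord_one
  | succ n ih => rw [pow_succ, hF.ord_mul _ _ (pow_ne_zero _ hx) hx, ih]; push_cast; ring

lemma ordGE_of_mem {x : F} (hx : x ∈ O) : OrdGE ord x 0 := (hF.mem_integers x).mp hx

lemma mem_of_ordGE {x : F} {k : ℤ} (hk : 0 ≤ k) : OrdGE ord x k → x ∈ O
  | .inl h => (hF.mem_integers x).mpr (.inl h)
  | .inr h => (hF.mem_integers x).mpr (.inr (hk.trans h))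

lemma ordGE_neg {x : F} {k : ℤ} : OrdGE ord x k → OrdGE ord (-x) k
  | .inl h => .inl (by rw [h, neg_zero])
  | .inr h => by
    by_cases hx : x = 0
    · exact .inl (by rw [hx, neg_zero])
    · exact .inr (by rwa [hF.ord_neg hx])

lemma ordGE_add {x y : F} {k : ℤ} (hx : OrdGE ord x k) (hy : OrdGE ord y k) :
    OrdGE ord (x + y) k := by
  rcases hx with rfl | hx
  · rwa [zero_add]
  rcases hy with rfl | hy
  · rw [add_zero]; exact .inr hx
  by_cases hxy : x + y = 0
  · exact .inl hxy
  by_cases hx0 : x = 0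
  · rw [hx0, zero_add]; exact .inr hy
  by_cases hy0 : y = 0
  · rw [hy0, add_zero]; exact .inr hx
  exact .inr ((le_min hx hy).trans (hF.min_le_ord_add x y hx0 hy0 hxy))

lemma ordGE_sub {x y : F} {k : ℤ} (hx : OrdGE ord x k) (hy : OrdGE ord y k) :
    OrdGE ord (x - y) k := by
  rw [sub_eq_add_neg]; exact hF.ordGE_add hx (hF.ordGE_neg hy)

lemma ordGE_mul {x y : F} {k l : ℤ} (hx : OrdGE ord x k) (hy : OrdGE ord y l) :
    OrdGE ord (x * y) (k + l) := by
  rcases hx with rfl | hx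
  · exact .inl (zero_mul y)
  rcases hy with rfl | hy
  · exact .inl (mul_zero x)
  by_cases hx0 : x = 0
  · exact .inl (by rw [hx0, zero_mul])
  by_cases hy0 : y = 0
  · exact .inl (by rw [hy0, mul_zero])
  exact .inr (by rw [hF.ord_mul x y hx0 hy0]; omega)

lemma ord_add_of_lt {x y : F} (hx : x ≠ 0) (hy : OrdGE ord y (ord x + 1)) :
    x + y ≠ 0 ∧ ord (x + y) = ord x := by
  rcases hy with rfl | hy
  · rw [add_zero]; exact ⟨hx, rfl⟩
  by_cases hy0 : y = 0
  · rw [hy0, add_zero]; exact ⟨hx, rfl⟩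
  have hxy : x + y ≠ 0 := fun h => by
    rw [show y = -x by linear_combination h, hF.ord_neg hx] at hy; omega
  have hle := hF.min_le_ord_add x y hx hy0 hxy
  have hge := hF.min_le_ord_add (x + y) (-y) hxy (neg_ne_zero.mpr hy0) (by simpa using hx)
  rw [add_neg_cancel_right, hF.ord_neg hy0] at hge
  exact ⟨hxy, by omega⟩

lemma ordGE_of_mul_self {x : F} {k : ℤ} (hx : OrdGE ord (x * x) (2 * k - 1)) : OrdGE ord x k := by
  rcases hx with hx | hx
  · exact .inl (mul_self_eq_zero.mp hx)
  by_cases hx0 : x = 0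
  · exact .inl hx0
  · rw [hF.ord_mul _ _ hx0 hx0] at hx; exact .inr (by omega)

lemma ordGE_pow_mul {π x : F} (hπ : π ≠ 0 ∧ ord π = 1) {k : ℤ} (hx : OrdGE ord x k) (n : ℕ) :
    OrdGE ord (π ^ n * x) (n + k) :=
  hF.ordGE_mul (.inr (by rw [hF.ord_pow hπ.1, hπ.2, mul_one])) hx

lemma ord_pow_mul {π x : F} (hπ : π ≠ 0 ∧ ord π = 1) (hx : x ≠ 0) (k : ℕ) :
    π ^ k * x ≠ 0 ∧ ord (π ^ k * x) = k + ord x := by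
  refine ⟨mul_ne_zero (pow_ne_zero _ hπ.1) hx, ?_⟩
  rw [hF.ord_mul _ _ (pow_ne_zero _ hπ.1) hx, hF.ord_pow hπ.1, hπ.2, mul_one]

end LocalFieldAxioms

namespace LocalFieldAxioms

variable (hF : LocalFieldAxioms O ord 2 q)
include hF

lemma one_le_ord_two : 1 ≤ ord (2 : F) := by
  have := hF.ord_p_pos
  push_cast at this
  omega

lemma exists_mul_self_congr {u : F} (hu : u ∈ O) : ∃ m ∈ O, OrdGE ord (m * m - u) 1 := by
  obtain ⟨R, -, hRO, hrep, huniq⟩ := hF.residue_card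
  choose φ hφR hφ using fun y (hy : y ∈ R) => hrep (y * y) (O.mul_mem (hRO y hy) (hRO y hy))
  -- squaring is injective on the residue field, because `(y - z) ^ 2 ≡ y ^ 2 - z ^ 2 mod 2`
  have hinj : ∀ y z hy hz, φ y hy = φ z hz → y = z := by
    intro y z hy hz hyz
    have hsq : OrdGE ord (y * y - z * z) 1 := by
      simpa [hyz] using hF.ordGE_sub (hφ y hy) (hφ z hz)
    have h2 : OrdGE ord (2 * (z * (y - z))) (1 + 0) :=
      hF.ordGE_mul (.inr hF.one_le_ord_two)
        (hF.ordGE_of_mem (O.mul_mem (hRO z hz) (O.sub_mem (hRO y hy) (hRO z hz))))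
    refine huniq y hy z hz (hF.ordGE_of_mul_self ?_)
    rw [show (y - z) * (y - z) = (y * y - z * z) - 2 * (z * (y - z)) by ring]
    exact hF.ordGE_sub hsq h2
  obtain ⟨r, hr, hur⟩ := hrep u hu
  obtain ⟨m, hm, rfl⟩ := Finset.surj_on_of_inj_on_of_card_le φ hφR hinj le_rfl r hr
  refine ⟨m, hRO m hm, ?_⟩
  simpa using hF.ordGE_sub (hφ m hm) hur

end LocalFieldAxioms

lemma transpose_orthSum {m k : ℕ} (A : Matrix (Fin m) (Fin m) F)
    (B : Matrix (Fin k) (Fin k) F) : (orthSum A B)ᵀ = orthSum Aᵀ Bᵀ := by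
  simp [orthSum, Matrix.transpose_submatrix, Matrix.fromBlocks_transpose]

lemma orthSum_mul_orthSum {m k : ℕ} (A A' : Matrix (Fin m) (Fin m) F)
    (B B' : Matrix (Fin k) (Fin k) F) :
    orthSum A B * orthSum A' B' = orthSum (A * A') (B * B') := by
  simp [orthSum, Matrix.submatrix_mul_equiv, Matrix.fromBlocks_multiply]

lemma det_orthSum {m k : ℕ} (A : Matrix (Fin m) (Fin m) F) (B : Matrix (Fin k) (Fin k) F) :
    (orthSum A B).det = A.det * B.det := by
  simp [orthSum, Matrix.det_fromBlocks_zero₂₁]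

lemma orthSum_apply_mem {m k : ℕ} {A : Matrix (Fin m) (Fin m) F} {B : Matrix (Fin k) (Fin k) F}
    (hA : ∀ i j, A i j ∈ O) (hB : ∀ i j, B i j ∈ O) (i j : Fin (m + k)) : orthSum A B i j ∈ O := by
  simp only [orthSum, Matrix.reindex_apply, Matrix.submatrix_apply]
  rcases finSumFinEquiv.symm i with i | i <;> rcases finSumFinEquiv.symm j with j | j <;>
    simp [hA, hB, O.zero_mem]

namespace EquivO

variable (hF : LocalFieldAxioms O ord p q)
include hF

lemma trans {n : ℕ} {A B C : Matrix (Fin n) (Fin n) F} (hAB : EquivO O ord A B)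
    (hBC : EquivO O ord B C) : EquivO O ord A C := by
  obtain ⟨U, ⟨hU, hU0, hU1⟩, rfl⟩ := hAB
  obtain ⟨V, ⟨hV, hV0, hV1⟩, rfl⟩ := hBC
  refine ⟨U * V, ⟨fun i j => ?_, ?_, ?_⟩, by simp [Matrix.transpose_mul, Matrix.mul_assoc]⟩
  · exact Matrix.mul_apply (M := U) ▸ O.sum_mem fun l _ => O.mul_mem (hU i l) (hV l j)
  · rw [Matrix.det_mul]; exact mul_ne_zero hU0 hV0
  · rw [Matrix.det_mul, hF.ord_mul _ _ hU0 hV0, hU1, hV1, add_zero]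

lemma orthSum {m k : ℕ} {A A' : Matrix (Fin m) (Fin m) F} {B B' : Matrix (Fin k) (Fin k) F}
    (hA : EquivO O ord A A') (hB : EquivO O ord B B') :
    EquivO O ord (orthSum A B) (orthSum A' B') := by
  obtain ⟨U, ⟨hU, hU0, hU1⟩, rfl⟩ := hA
  obtain ⟨V, ⟨hV, hV0, hV1⟩, rfl⟩ := hB
  refine ⟨GK.orthSum U V, ⟨orthSum_apply_mem hU hV, ?_, ?_⟩, ?_⟩
  · rw [det_orthSum]; exact mul_ne_zero hU0 hV0
  · rw [det_orthSum, hF.ord_mul _ _ hU0 hV0, hU1, hV1, add_zero]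
  · rw [transpose_orthSum, orthSum_mul_orthSum, orthSum_mul_orthSum]

end EquivO

lemma EquivO.neg {n : ℕ} {A B : Matrix (Fin n) (Fin n) F} (h : EquivO O ord A B) :
    EquivO O ord (-A) (-B) := by
  obtain ⟨U, hU, rfl⟩ := h
  exact ⟨U, hU, by simp⟩

lemma isAdmissible_of_fixedPointFree {n : ℕ} {a : Fin n → ℕ} {σ : Fin n → Fin n}
    (ha : Monotone a) (hσ : ∀ i, σ (σ i) = i) (hfix : ∀ i, σ i ≠ i)
    (hplus : ∀ i j, a i = a j → a (σ i) < a i → a (σ j) < a j → i = j)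
    (hminus : ∀ i j, a i = a j → a i < a (σ i) → a j < a (σ j) → i = j)
    (hup : ∀ i j, a i < a (σ i) → a (σ i) % 2 = a i % 2 ∧
      (a (σ j) < a j → a i < a j → a j % 2 = a i % 2 → a (σ i) ≤ a j))
    (hdown : ∀ i j, a (σ i) < a i → a j < a (σ j) → a j < a i → a j % 2 = a i % 2 →
      a j ≤ a (σ i)) :
    IsAdmissible a σ :=
  ⟨ha, hσ, fun i _ _ hi => absurd hi (hfix i), fun i _ hi => absurd hi (hfix i),
    fun i hi => absurd hi (hfix i), hplus,
    fun i j hij hi hj => hminus i j hij (hi.resolve_right (hfix i)) (hj.resolve_right (hfix j)),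
    fun i hi => ⟨(hup i i hi).1, fun j => (hup i j hi).2⟩,
    fun i hi j => hdown i j hi⟩

lemma isAdmissible_12_34 {c A A' : ℕ} (hc : c % 2 = 0) (hcA : c ≤ A) (hA' : A' = A + c) :
    IsAdmissible ![0, c, A, A'] ![1, 0, 3, 2] := by
  refine isAdmissible_of_fixedPointFree ?_ (by decide) (by decide) ?_ ?_ ?_ ?_
  · rw [Fin.monotone_iff_le_succ]; intro i; fin_cases i <;> simp <;> omega
  all_goals intro i j; fin_cases i <;> fin_cases j <;> simp <;> omega

lemma isAdmissible_14_23 {x y H : ℕ} (hxy : x ≤ y) (hpar : x % 2 = y % 2)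
    (hx : x = y ∨ x % 2 = 1) (hH : H = x + y) :
    IsAdmissible ![0, x, y, H] ![3, 2, 1, 0] := by
  refine isAdmissible_of_fixedPointFree ?_ (by decide) (by decide) ?_ ?_ ?_ ?_
  · rw [Fin.monotone_iff_le_succ]; intro i; fin_cases i <;> simp <;> omega
  all_goals intro i j; fin_cases i <;> fin_cases j <;> simp <;> omega

lemma isAdmissible_13_24 {f e H : ℕ} (hfe : f < e) (hH : H = 2 * e + 2 * f + 1) :
    IsAdmissible ![0, 2 * f + 1, 2 * e, H] ![2, 3, 0, 1] := by
  refine isAdmissible_of_fixedPointFree ?_ (by decide) (by decide) ?_ ?_ ?_ ?_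
  · rw [Fin.monotone_iff_le_succ]; intro i; fin_cases i <;> simp <;> omega
  all_goals intro i j; fin_cases i <;> fin_cases j <;> simp <;> omega

lemma isReducedForm_of_ord (hF : LocalFieldAxioms O ord p q) {n : ℕ}
    {B : Matrix (Fin n) (Fin n) F} {a : Fin n → ℕ} {σ : Fin n → Fin n}
    (hB : B.IsSymm) (hdet : B.det ≠ 0) (hσ : IsAdmissible a σ)
    (hdiag : ∀ i, OrdGE ord (B i i) (a i))
    (hdiag_eq : ∀ i, (σ i = i ∨ a i < a (σ i)) → B i i ≠ 0 ∧ ord (B i i) = a i)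
    (hpair : ∀ i, i < σ i → 2 * B i (σ i) ≠ 0 ∧ 2 * ord (2 * B i (σ i)) = a i + a (σ i))
    (hoff : ∀ i j, i < j → j ≠ σ i → 2 * B i j = 0 ∨ (a i + a j : ℤ) < 2 * ord (2 * B i j)) :
    IsReducedForm O ord B a σ := by
  have hσσ : ∀ i, σ (σ i) = i := hσ.2.1
  have hpair' : ∀ i, σ i ≠ i →
      2 * B i (σ i) ≠ 0 ∧ 2 * ord (2 * B i (σ i)) = a i + a (σ i) := by
    intro i hi
    rcases lt_or_gt_of_ne hi with h | h
    · have := hpair (σ i) (by rwa [hσσ])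
      rwa [hσσ, hB.apply, add_comm] at this
    · exact hpair i h
  have hoff' : ∀ i j, j ≠ i → j ≠ σ i →
      2 * B i j = 0 ∨ (a i + a j : ℤ) < 2 * ord (2 * B i j) := by
    intro i j hji hjσ
    rcases lt_or_gt_of_ne hji with h | h
    · have := hoff j i h fun hi => hjσ (by rw [hi, hσσ])
      rwa [hB.apply, add_comm] at this
    · exact hoff i j h hjσ
  have h2 : (2 : F) ≠ 0 := hF.two_ne_zero
  have hord2 : 0 ≤ ord (2 : F) := ((hF.mem_integers 2).mp (ofNat_mem O 2)).resolve_left h2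
  have hInS : ∀ i j, 2 * B i j = 0 ∨ (a i + a j : ℤ) ≤ 2 * ord (2 * B i j) := by
    intro i j
    by_cases hji : j = i
    · subst hji
      rcases hdiag j with h | h
      · exact .inl (by rw [h, mul_zero])
      · by_cases h0 : B j j = 0
        · exact .inl (by rw [h0, mul_zero])
        · exact .inr (by rw [hF.ord_mul _ _ h2 h0]; omega)
    by_cases hjσ : j = σ i
    · subst hjσ
      exact .inr (hpair' i hji).2.ge
    · exact (hoff' i j hji hjσ).imp_right le_of_lt
  refine ⟨⟨hB, fun i => hF.mem_of_ordGE (Int.natCast_nonneg _) (hdiag i), fun i j => ?_⟩,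
    hdet, ⟨hσ.1, hdiag, hInS⟩, hσ, hpair', hdiag_eq, hoff'⟩
  rcases hInS i j with h | h
  · rw [h]; exact O.zero_mem
  · exact (hF.mem_integers _).mpr (.inr (by omega))

namespace QuadAlgebraAxioms

variable {E : Type} [CommRing E] [Algebra F E] {ω : E} {d : ℕ} {ξ : ℤ}
  (hE : QuadAlgebraAxioms O ord E ω d ξ)
include hE

lemma trace_add_mul (a b : F) :
    Algebra.trace F E (algebraMap F E a + algebraMap F E b * ω) =
      2 * a + b * Algebra.trace F E ω := by
  rw [map_add, Algebra.trace_algebraMap, hE.finrank_two, ← Algebra.smul_def, map_smul,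
    nsmul_eq_mul, Nat.cast_ofNat, smul_eq_mul]

lemma norm_add_mul (a b : F) :
    Algebra.norm F (algebraMap F E a + algebraMap F E b * ω) =
      a ^ 2 + a * b * Algebra.trace F E ω + b ^ 2 * Algebra.norm F ω := by
  have : Module.Finite F E := Module.finite_of_finrank_eq_succ hE.finrank_two
  let bs := Module.finBasisOfFinrankEq F E hE.finrank_two
  rw [Algebra.norm_eq_matrix_det bs, Algebra.trace_eq_matrix_trace bs,
    Algebra.norm_eq_matrix_det bs, map_add, map_mul, AlgHom.commutes, AlgHom.commutes,
    Matrix.det_fin_two, Matrix.det_fin_two, Matrix.trace_fin_two]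
  simp [Matrix.algebraMap_eq_diagonal]
  ring

lemma mem_of_trace_mem_of_norm_mem {a b : F}
    (htr : Algebra.trace F E (algebraMap F E a + algebraMap F E b * ω) ∈ O)
    (hnm : Algebra.norm F (algebraMap F E a + algebraMap F E b * ω) ∈ O) : b ∈ O := by
  obtain ⟨a', b', -, hb', hx⟩ := hE.max_order _ htr hnm
  have := (hE.indep (a - a') (b - b') (by rw [map_sub, map_sub]; linear_combination hx)).2
  rwa [sub_eq_zero.mp this]

lemma ordGE_trace (hF : LocalFieldAxioms O ord p q) {g : ℕ} (hg : (g : ℤ) ≤ ord (2 : F))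
    (hd : 2 * g ≤ d + 1) : OrdGE ord (Algebra.trace F E ω) g := by
  set T := Algebra.trace F E ω
  by_contra hT
  have hT0 : T ≠ 0 := fun h => hT (.inl h)
  have hTg : ord T < g := by by_contra h; exact hT (.inr (by omega))
  have hT2 : ord (T ^ 2) = 2 * ord T := by rw [hF.ord_pow hT0]; push_cast; ring
  have hT0' : 0 ≤ ord T := (hF.ordGE_of_mem hE.trace_mem).resolve_left hT0
  have h4S : OrdGE ord (-(2 * 2 * Algebra.norm F ω)) (ord (T ^ 2) + 1) :=
    hF.ordGE_neg ((hF.ordGE_mul (hF.ordGE_mul (.inr hg) (.inr hg))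
      (hF.ordGE_of_mem hE.norm_mem)).mono (by omega))
  have hdisc := (hF.ord_add_of_lt (pow_ne_zero 2 hT0) h4S).2
  rw [← sub_eq_add_neg, show (2 * 2 : F) = 4 by norm_num, hE.disc_ord] at hdisc
  omega

lemma trace_ne_zero_of_unramified (hF : LocalFieldAxioms O ord 2 q) (hd : d = 0) :
    Algebra.trace F E ω ≠ 0 ∧ ord (Algebra.trace F E ω) = 0 := by
  set T := Algebra.trace F E ω
  by_contra hT
  have hT1 : OrdGE ord T 1 := by
    by_cases h0 : T = 0
    · exact .inl h0
    have hT0 : 0 ≤ ord T := (hF.ordGE_of_mem hE.trace_mem).resolve_left h0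
    exact .inr (by by_contra h'; exact hT ⟨h0, by omega⟩)
  have h4S : OrdGE ord (2 * 2 * Algebra.norm F ω) (1 + 1 + 0) :=
    hF.ordGE_mul (hF.ordGE_mul (.inr hF.one_le_ord_two) (.inr hF.one_le_ord_two))
      (hF.ordGE_of_mem hE.norm_mem)
  have hdisc := hF.ordGE_sub (hF.ordGE_mul hT1 hT1) (h4S.mono (by norm_num))
  rw [← sq, show (2 * 2 : F) = 4 by norm_num] at hdisc
  rcases hdisc with h | h
  · exact hE.disc_ne h
  · rw [hE.disc_ord, hd] at h; omega

lemma exists_ord_norm_sub_eq_one (hF : LocalFieldAxioms O ord 2 q) {π : F}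
    (hπ : π ≠ 0 ∧ ord π = 1) (hd : 1 ≤ d) :
    ∃ m ∈ O, m * m - m * Algebra.trace F E ω + Algebra.norm F ω ≠ 0 ∧
      ord (m * m - m * Algebra.trace F E ω + Algebra.norm F ω) = 1 := by
  set T := Algebra.trace F E ω
  set S := Algebra.norm F ω
  have hT : OrdGE ord T 1 :=
    hE.ordGE_trace hF (g := 1) (by simpa using hF.one_le_ord_two) (by omega)
  obtain ⟨m, hm, hmS⟩ := hF.exists_mul_self_congr (O.neg_mem hE.norm_mem)
  have hmO := hF.ordGE_of_mem hm
  have h1 : OrdGE ord (m * m - m * T + S) 1 := by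
    rw [show m * m - m * T + S = (m * m - -S) - m * T by ring]
    exact hF.ordGE_sub hmS (by simpa using hF.ordGE_mul hmO hT)
  have hπinv : OrdGE ord π⁻¹ (-1) := .inr (by rw [hF.ord_inv hπ.1, hπ.2])
  -- `(ω - m) / π` is not integral, so `N(ω - m)` cannot lie in `𝔭²`
  have h2 : ¬ OrdGE ord (m * m - m * T + S) 2 := fun h2 => by
    have hmem : π⁻¹ ∈ O := by
      refine hE.mem_of_trace_mem_of_norm_mem (a := -m * π⁻¹) ?_ ?_
      · rw [hE.trace_add_mul, show 2 * (-m * π⁻¹) + π⁻¹ * T = (T - 2 * m) * π⁻¹ by ring]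
        have h2m : OrdGE ord (2 * m) (1 + 0) := hF.ordGE_mul (.inr hF.one_le_ord_two) hmO
        exact hF.mem_of_ordGE le_rfl (by simpa using hF.ordGE_mul (hF.ordGE_sub hT h2m) hπinv)
      · rw [hE.norm_add_mul,
          show (-m * π⁻¹) ^ 2 + -m * π⁻¹ * π⁻¹ * T + π⁻¹ ^ 2 * S = (m * m - m * T + S) * (π⁻¹ * π⁻¹)
            by ring]
        exact hF.mem_of_ordGE le_rfl (by simpa using hF.ordGE_mul h2 (hF.ordGE_mul hπinv hπinv))
    rcases hF.ordGE_of_mem hmem with h | h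
    · exact inv_ne_zero hπ.1 h
    · rw [hF.ord_inv hπ.1, hπ.2] at h; omega
  refine ⟨m, hm, fun h => h2 (.inl h), ?_⟩
  rcases h1 with h | h
  · exact absurd (.inl h) h2
  · by_contra h'; exact h2 (.inr (by omega))

lemma exists_shift_of_even (hF : LocalFieldAxioms O ord 2 q) {π : F} (hπ : π ≠ 0 ∧ ord π = 1)
    {g : ℕ} (hg : 0 < g) (hge : (g : ℤ) ≤ ord (2 : F)) (hd : d = 2 * g) :
    ∃ m ∈ O, (m * m - m * Algebra.trace F E ω + Algebra.norm F ω ≠ 0 ∧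
      ord (m * m - m * Algebra.trace F E ω + Algebra.norm F ω) = 1) ∧
      (Algebra.trace F E ω - 2 * m ≠ 0 ∧ ord (Algebra.trace F E ω - 2 * m) = g) := by
  obtain ⟨m, hm, hS', hS'1⟩ := hE.exists_ord_norm_sub_eq_one hF hπ (by omega)
  refine ⟨m, hm, ⟨hS', hS'1⟩, ?_⟩
  set T := Algebra.trace F E ω
  set S' := m * m - m * T + Algebra.norm F ω
  have h4 : (2 * 2 : F) ≠ 0 := mul_ne_zero hF.two_ne_zero hF.two_ne_zero
  have h4S' : ord (2 * 2 * S') = 2 * ord (2 : F) + 1 := by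
    rw [hF.ord_mul _ _ h4 hS', hF.ord_mul _ _ hF.two_ne_zero hF.two_ne_zero, hS'1]; ring
  have hsq := hF.ord_add_of_lt hE.disc_ne (.inr (by rw [h4S', hE.disc_ord, hd]; push_cast; omega))
  rw [show T ^ 2 - 4 * Algebra.norm F ω + 2 * 2 * S' = (T - 2 * m) ^ 2 by ring, hE.disc_ord,
    hd] at hsq
  have hT' : T - 2 * m ≠ 0 := fun h => hsq.1 (by rw [h, sq, mul_zero])
  rw [hF.ord_pow hT'] at hsq
  exact ⟨hT', by push_cast at hsq; omega⟩

lemma exists_shift_of_odd (hF : LocalFieldAxioms O ord 2 q) {π : F} (hπ : π ≠ 0 ∧ ord π = 1)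
    (hd : (d : ℤ) = 2 * ord (2 : F) + 1) :
    ∃ m ∈ O, (m * m - m * Algebra.trace F E ω + Algebra.norm F ω ≠ 0 ∧
      ord (m * m - m * Algebra.trace F E ω + Algebra.norm F ω) = 1) ∧
      OrdGE ord (Algebra.trace F E ω - 2 * m) (ord (2 : F) + 1) := by
  have := hF.one_le_ord_two
  obtain ⟨m, hm, hS', hS'1⟩ := hE.exists_ord_norm_sub_eq_one hF hπ (by omega)
  refine ⟨m, hm, ⟨hS', hS'1⟩, hF.ordGE_of_mul_self ?_⟩
  set T := Algebra.trace F E ω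
  set S' := m * m - m * T + Algebra.norm F ω
  have h4 : (2 * 2 : F) ≠ 0 := mul_ne_zero hF.two_ne_zero hF.two_ne_zero
  have h4S' : ord (2 * 2 * S') = 2 * ord (2 : F) + 1 := by
    rw [hF.ord_mul _ _ h4 hS', hF.ord_mul _ _ hF.two_ne_zero hF.two_ne_zero, hS'1]; ring
  rw [show (T - 2 * m) * (T - 2 * m) = (T ^ 2 - 4 * Algebra.norm F ω) + 2 * 2 * S' by ring]
  exact hF.ordGE_add (.inr (by rw [hE.disc_ord]; omega)) (.inr (by omega))

end QuadAlgebraAxioms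

def shapeA (t : F) : Matrix (Fin 4) (Fin 4) F :=
  !![1, 1, 0, 0; 1, 0, 0, 0; 0, 0, t, t; 0, 0, t, 0]

def shapeB (β s : F) : Matrix (Fin 4) (Fin 4) F :=
  !![1, 1, β, β; 1, 0, β, 0; β, β, s, s; β, 0, s, 0]

def shapeC (β s : F) : Matrix (Fin 4) (Fin 4) F :=
  !![1, β, 1, β; β, s, β, s; 1, β, 0, 0; β, s, 0, 0]

def shapeD (β s : F) : Matrix (Fin 4) (Fin 4) F :=
  !![s, β, 0, 0; β, 0, 0, 0; 0, 0, 0, 2 * (β ^ 2 - s); 0, 0, 2 * (β ^ 2 - s), 4 * (β ^ 2 - s)]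

lemma det_shapeA (t : F) : (shapeA t).det = t ^ 2 := by
  simp [shapeA, Matrix.det_succ_row_zero, Fin.sum_univ_succ, Fin.succAbove]; ring

lemma det_shapeB (β s : F) : (shapeB β s).det = (s - β ^ 2) ^ 2 := by
  simp [shapeB, Matrix.det_succ_row_zero, Fin.sum_univ_succ, Fin.succAbove]; ring

lemma det_shapeC (β s : F) : (shapeC β s).det = (s - β ^ 2) ^ 2 := by
  simp [shapeC, Matrix.det_succ_row_zero, Fin.sum_univ_succ, Fin.succAbove]; ring

lemma det_shapeD (β s : F) : (shapeD β s).det = (2 * β) ^ 2 * (s - β ^ 2) ^ 2 := by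
  simp [shapeD, Matrix.det_succ_row_zero, Fin.sum_univ_succ, Fin.succAbove]; ring

section ReducedShapes

variable (hF : LocalFieldAxioms O ord p q)
include hF

lemma isReducedForm_shapeD {β s : F} (hβ : 2 * β ≠ 0) (hβ0 : ord (2 * β) = 0) (hs : s ∈ O)
    (hδ : 4 * (β ^ 2 - s) ≠ 0) (hδ0 : ord (4 * (β ^ 2 - s)) = 0) :
    IsReducedForm O ord (shapeD β s) ![0, 0, 0, 0] ![1, 0, 3, 2] := by
  have hs0 := hF.ordGE_of_mem hs
  have h22 : 2 * (2 * (β ^ 2 - s)) = 4 * (β ^ 2 - s) := by ring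
  have hdet : (2 * β) ^ 2 * (s - β ^ 2) ^ 2 ≠ 0 :=
    mul_ne_zero (pow_ne_zero 2 hβ) (pow_ne_zero 2 fun h => hδ (by linear_combination -4 * h))
  refine isReducedForm_of_ord hF (.ext fun i j => by fin_cases i <;> fin_cases j <;> rfl)
    (by rwa [det_shapeD]) (isAdmissible_12_34 rfl le_rfl rfl) ?_ ?_ ?_ ?_
  all_goals intro i; fin_cases i
  all_goals try (intro j hij hj; fin_cases j <;> simp at hij hj)
  all_goals simp [shapeD, h22, -mul_eq_zero]
  all_goals first
    | exact .inl rfl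
    | exact .inr (by omega)
    | exact ⟨by assumption, by omega⟩
    | assumption

variable {e : ℕ} (he : ord (2 : F) = e)
include he

lemma isReducedForm_shapeA {t : F} {A A' : ℕ} (ht : t ≠ 0) (htA : ord t = A)
    (heA : 2 * e ≤ A) (hA' : A' = A + 2 * e) :
    IsReducedForm O ord (shapeA t) ![0, 2 * e, A, A'] ![1, 0, 3, 2] := by
  have h1 := hF.ord_one
  have h2 : (2 : F) ≠ 0 := hF.two_ne_zero
  have h2t : 2 * t ≠ 0 := mul_ne_zero h2 ht
  have h2tA : ord (2 * t) = e + A := by rw [hF.ord_mul _ _ h2 ht, he, htA]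
  refine isReducedForm_of_ord hF (.ext fun i j => by fin_cases i <;> fin_cases j <;> rfl)
    (by rw [det_shapeA]; exact pow_ne_zero 2 ht) (isAdmissible_12_34 (by omega) heA hA')
    ?_ ?_ ?_ ?_
  all_goals intro i; fin_cases i
  all_goals try (intro j hij hj; fin_cases j <;> simp at hij hj)
  all_goals simp [shapeA, -mul_eq_zero]
  all_goals first
    | exact .inl rfl
    | exact .inr (by omega)
    | exact ⟨by assumption, by omega⟩
    | exact fun _ => ⟨by assumption, by omega⟩
    | exact fun _ => by omega
    | omega

lemma isReducedForm_shapeB {β s : F} {h H : ℕ} {k : ℤ} (hβ : 2 * β ≠ 0) (hβh : ord (2 * β) = h)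
    (hh : 1 ≤ h) (hhe : h < 2 * e) (hs : OrdGE ord s k) (hk : h ≤ k) (hk' : 3 * h < 2 * e + 2 * k)
    (hH : H = 2 * h) (hdet : s - β ^ 2 ≠ 0) :
    IsReducedForm O ord (shapeB β s) ![0, h, h, H] ![3, 2, 1, 0] := by
  have h1 := hF.ord_one
  have h2s := hF.ordGE_mul (.inr he.ge : OrdGE ord (2 : F) e) hs
  refine isReducedForm_of_ord hF (.ext fun i j => by fin_cases i <;> fin_cases j <;> rfl)
    (by rw [det_shapeB]; exact pow_ne_zero 2 hdet)
    (isAdmissible_14_23 le_rfl rfl (.inl rfl) (by omega)) ?_ ?_ ?_ ?_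
  all_goals intro i; fin_cases i
  all_goals try (intro j hij hj; fin_cases j <;> simp at hij hj)
  all_goals simp [shapeB, -mul_eq_zero]
  all_goals first
    | exact .inl rfl
    | exact .inr (by omega)
    | exact ⟨by assumption, by omega⟩
    | exact fun _ => by omega
    | omega
    | exact hs.mono (by omega)
    | exact h2s.imp_right fun _ => by omega

lemma isReducedForm_shapeC_14_23 {β s : F} {h x y H : ℕ} (hβ : 2 * β ≠ 0)
    (hβh : ord (2 * β) = h) (hs : s ≠ 0) (hsx : ord s = x) (hxy : x ≤ y) (hx : x % 2 = 1)
    (hy : y % 2 = 1) (hye : y < 2 * e) (hxyh : x + y = 2 * h) (hH : H = x + y)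
    (hdet : s - β ^ 2 ≠ 0) :
    IsReducedForm O ord (shapeC β s) ![0, x, y, H] ![3, 2, 1, 0] := by
  have h1 := hF.ord_one
  have h2s := hF.ordGE_mul (.inr he.ge : OrdGE ord (2 : F) e) (.inr hsx.ge : OrdGE ord s x)
  refine isReducedForm_of_ord hF (.ext fun i j => by fin_cases i <;> fin_cases j <;> rfl)
    (by rw [det_shapeC]; exact pow_ne_zero 2 hdet)
    (isAdmissible_14_23 hxy (by omega) (.inr hx) hH) ?_ ?_ ?_ ?_
  all_goals intro i; fin_cases i
  all_goals try (intro j hij hj; fin_cases j <;> simp at hij hj)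
  all_goals simp [shapeC, -mul_eq_zero]
  all_goals first
    | exact .inl rfl
    | exact .inr (by omega)
    | exact ⟨by assumption, by omega⟩
    | exact fun _ => ⟨by assumption, by omega⟩
    | exact fun _ => by omega
    | omega
    | exact h2s.imp_right fun _ => by omega

lemma isReducedForm_shapeC_13_24 {β s : F} {f H : ℕ} (hβ : OrdGE ord (2 * β) (e + f + 1))
    (hs : s ≠ 0) (hsf : ord s = 2 * f + 1) (hfe : f < e) (hH : H = 2 * e + 2 * f + 1)
    (hdet : s - β ^ 2 ≠ 0) :
    IsReducedForm O ord (shapeC β s) ![0, 2 * f + 1, 2 * e, H] ![2, 3, 0, 1] := by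
  have h1 := hF.ord_one
  have h2 : (2 : F) ≠ 0 := hF.two_ne_zero
  have h2s : 2 * s ≠ 0 := mul_ne_zero h2 hs
  have h2sf : ord (2 * s) = e + (2 * f + 1) := by rw [hF.ord_mul _ _ h2 hs, he, hsf]
  refine isReducedForm_of_ord hF (.ext fun i j => by fin_cases i <;> fin_cases j <;> rfl)
    (by rw [det_shapeC]; exact pow_ne_zero 2 hdet) (isAdmissible_13_24 hfe hH) ?_ ?_ ?_ ?_
  all_goals intro i; fin_cases i
  all_goals try (intro j hij hj; fin_cases j <;> simp at hij hj)
  all_goals simp [shapeC, -mul_eq_zero]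
  all_goals first
    | exact .inl rfl
    | exact .inr (by omega)
    | exact ⟨by assumption, by omega⟩
    | exact fun _ => ⟨by assumption, by omega⟩
    | exact fun _ => by omega
    | omega
    | exact hβ.imp_right fun _ => by omega

end ReducedShapes

def binGram (β s : F) : Matrix (Fin 2) (Fin 2) F := !![1, β; β, s]

lemma orthSum_binGram (β s : F) : orthSum (binGram β s) (-binGram β s) =
    !![1, β, 0, 0; β, s, 0, 0; 0, 0, -1, -β; 0, 0, -β, -s] := by
  ext i j; fin_cases i <;> fin_cases j <;> rfl

section Equivalences

variable (hF : LocalFieldAxioms O ord p q)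
include hF

lemma binGram_equivO_shift {β s c : F} (hc : c ∈ O) :
    EquivO O ord (binGram β s) (binGram (β + c) (s + 2 * c * β + c ^ 2)) := by
  refine ⟨!![1, c; 0, 1], ⟨fun i j => ?_, by simp, by simpa using hF.ord_one⟩, ?_⟩
  · fin_cases i <;> fin_cases j <;> simp [hc, O.one_mem, O.zero_mem]
  · ext i j
    fin_cases i <;> fin_cases j <;> simp [binGram, Matrix.mul_apply, Fin.sum_univ_succ] <;> ring

lemma equivO_shapeA {β s : F} (hβ : β ∈ O) :
    EquivO O ord (orthSum (binGram β s) (-binGram β s)) (shapeA (s - β ^ 2)) := by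
  refine ⟨!![1, 1, -β, -β; 0, 0, 1, 1; 0, 1, 0, -β; 0, 0, 0, 1], ⟨fun i j => ?_, ?_, ?_⟩, ?_⟩
  · fin_cases i <;> fin_cases j <;> simp [hβ, O.one_mem, O.zero_mem]
  · simp [Matrix.det_succ_row_zero, Fin.sum_univ_succ, Fin.succAbove]
  · simp [Matrix.det_succ_row_zero, Fin.sum_univ_succ, Fin.succAbove, hF.ord_neg one_ne_zero,
      hF.ord_one]
  · rw [orthSum_binGram]; ext i j
    fin_cases i <;> fin_cases j <;> simp [shapeA, Matrix.mul_apply, Fin.sum_univ_succ] <;> ring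

lemma equivO_shapeB {β s : F} (hβ : 2 * β ∈ O) :
    EquivO O ord (orthSum (binGram β s) (-binGram β s)) (shapeB β s) := by
  refine ⟨!![1, 1, 0, 0; 0, 0, 1, 1; 0, 1, 0, 2 * β; 0, 0, 0, -1], ⟨fun i j => ?_, ?_, ?_⟩, ?_⟩
  · fin_cases i <;> fin_cases j <;> simp [hβ, O.one_mem, O.zero_mem]
  · simp [Matrix.det_succ_row_zero, Fin.sum_univ_succ, Fin.succAbove]
  · simp [Matrix.det_succ_row_zero, Fin.sum_univ_succ, Fin.succAbove, hF.ord_one]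
  · rw [orthSum_binGram]; ext i j
    fin_cases i <;> fin_cases j <;> simp [shapeB, Matrix.mul_apply, Fin.sum_univ_succ] <;> ring

lemma equivO_shapeC {β s : F} (hβ : 2 * β ∈ O) :
    EquivO O ord (orthSum (binGram β s) (-binGram β s)) (shapeC β s) := by
  refine ⟨!![1, 0, 1, 0; 0, 1, 0, 1; 0, 0, 1, 2 * β; 0, 0, 0, -1], ⟨fun i j => ?_, ?_, ?_⟩, ?_⟩
  · fin_cases i <;> fin_cases j <;> simp [hβ, O.one_mem, O.zero_mem]
  · simp [Matrix.det_succ_row_zero, Fin.sum_univ_succ, Fin.succAbove]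
  · simp [Matrix.det_succ_row_zero, Fin.sum_univ_succ, Fin.succAbove, hF.ord_neg one_ne_zero,
      hF.ord_one]
  · rw [orthSum_binGram]; ext i j
    fin_cases i <;> fin_cases j <;> simp [shapeC, Matrix.mul_apply, Fin.sum_univ_succ] <;> ring

lemma equivO_shapeD {β s : F} (hβ : 2 * β ≠ 0) (hβ0 : ord (2 * β) = 0) (hsβ : s / β ∈ O) :
    EquivO O ord (orthSum (binGram β s) (-binGram β s)) (shapeD β s) := by
  have hβ' : β ≠ 0 := right_ne_zero_of_mul hβ
  have h2β : 2 * β ∈ O := (hF.mem_integers _).mpr (.inr hβ0.ge)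
  set U : Matrix (Fin 4) (Fin 4) F :=
    !![0, 1, -(s / β), 0; 1, 0, 1, 0; 0, 1, -(s / β), -(2 * β); 0, 0, 1, 2]
  have hU : U.det = -(2 * β) := by
    simp [U, Matrix.det_succ_row_zero, Fin.sum_univ_succ, Fin.succAbove]
  refine ⟨U, ⟨fun i j => ?_, by rwa [hU, neg_ne_zero], by rw [hU, hF.ord_neg hβ, hβ0]⟩, ?_⟩
  · fin_cases i <;> fin_cases j <;> simp [U, hsβ, h2β, O.one_mem, O.zero_mem, ofNat_mem]
  · rw [orthSum_binGram]; ext i j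
    fin_cases i <;> fin_cases j <;> simp [U, shapeD, Matrix.mul_apply, Fin.sum_univ_succ] <;>
      field_simp <;> ring

end Equivalences

def HasReducedForm (O : Subring F) (ord : F → ℤ) {n : ℕ} (B : Matrix (Fin n) (Fin n) F)
    (a : Fin n → ℕ) (σ : Fin n → Fin n) : Prop :=
  ∃ B', EquivO O ord B B' ∧ IsReducedForm O ord B' a σ

section NormGram

variable (hF : LocalFieldAxioms O ord 2 q) {e : ℕ} (he : ord (2 : F) = e)
  {π : F} (hπ : π ≠ 0 ∧ ord π = 1) {T S : F} {f : ℕ}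
include hF

lemma hasReducedForm_of_shift (hπO : π ∈ O) {m : F} (hm : m ∈ O) {a : Fin 4 → ℕ}
    {σ : Fin 4 → Fin 4}
    (h : HasReducedForm O ord (orthSum (normGram π (T - 2 * m) (m * m - m * T + S) f)
      (-normGram π (T - 2 * m) (m * m - m * T + S) f)) a σ) :
    HasReducedForm O ord (orthSum (normGram π T S f) (-normGram π T S f)) a σ := by
  have hshift := binGram_equivO_shift hF (β := π ^ f * T / 2) (s := π ^ (2 * f) * S)
    (O.neg_mem (O.mul_mem hm (O.pow_mem hπO f)))
  have hβ : π ^ f * T / 2 + -(m * π ^ f) = π ^ f * (T - 2 * m) / 2 := by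
    field_simp [hF.two_ne_zero]; ring
  have hs : π ^ (2 * f) * S + 2 * -(m * π ^ f) * (π ^ f * T / 2) + (-(m * π ^ f)) ^ 2 =
      π ^ (2 * f) * (m * m - m * T + S) := by
    field_simp [hF.two_ne_zero]; ring
  rw [hβ, hs] at hshift
  obtain ⟨B', hB', hred⟩ := h
  exact ⟨B', (EquivO.orthSum hF hshift hshift.neg).trans hF hB', hred⟩

lemma hasReducedForm_shapeD (hT : T ≠ 0 ∧ ord T = 0) (hS : S ∈ O)
    (hD : T ^ 2 - 4 * S ≠ 0) (hD0 : ord (T ^ 2 - 4 * S) = 0) :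
    HasReducedForm O ord (orthSum (normGram π T S 0) (-normGram π T S 0))
      ![0, 0, 0, 0] ![1, 0, 3, 2] := by
  have h2 := hF.two_ne_zero
  have h2β : 2 * (T / 2) = T := mul_div_cancel₀ _ h2
  have hδ : 4 * ((T / 2) ^ 2 - S) = T ^ 2 - 4 * S := by field_simp; ring
  have hTinv : T⁻¹ ∈ O := hF.mem_of_ordGE le_rfl (.inr (by rw [hF.ord_inv hT.1, hT.2]; rfl))
  have hsβ : S / (T / 2) ∈ O := by
    rw [show S / (T / 2) = 2 * S * T⁻¹ by field_simp]
    exact O.mul_mem (O.mul_mem (ofNat_mem O 2) hS) hTinv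
  rw [show normGram π T S 0 = binGram (T / 2) S by simp [normGram, binGram]]
  have hβ : 2 * (T / 2) ≠ 0 := by rw [h2β]; exact hT.1
  have hβ0 : ord (2 * (T / 2)) = 0 := by rw [h2β]; exact hT.2
  exact ⟨_, equivO_shapeD hF hβ hβ0 hsβ,
    isReducedForm_shapeD hF hβ hβ0 hS (by rwa [hδ]) (by rwa [hδ])⟩

include he hπ

lemma normGram_det (hD : T ^ 2 - 4 * S ≠ 0) :
    π ^ (2 * f) * S - (π ^ f * T / 2) ^ 2 ≠ 0 ∧
      ord (π ^ (2 * f) * S - (π ^ f * T / 2) ^ 2) = 2 * f + ord (T ^ 2 - 4 * S) - 2 * e := by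
  have h2 := hF.two_ne_zero
  obtain ⟨hne, hord⟩ := hF.ord_pow_mul hπ hD (2 * f)
  rw [show π ^ (2 * f) * S - (π ^ f * T / 2) ^ 2 = -(π ^ (2 * f) * (T ^ 2 - 4 * S)) / (2 * 2) by
    field_simp; ring]
  refine ⟨div_ne_zero (neg_ne_zero.mpr hne) (mul_ne_zero h2 h2), ?_⟩
  rw [hF.ord_div (neg_ne_zero.mpr hne) (mul_ne_zero h2 h2), hF.ord_neg hne, hord,
    hF.ord_mul _ _ h2 h2, he]
  push_cast; ring

lemma hasReducedForm_shapeA (hD : T ^ 2 - 4 * S ≠ 0) {k : ℤ} (hT : OrdGE ord T k) (hk : e ≤ k + f)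
    {A A' : ℕ} (hA : (A : ℤ) = 2 * f + ord (T ^ 2 - 4 * S) - 2 * e) (heA : 2 * e ≤ A)
    (hA' : A' = A + 2 * e) :
    HasReducedForm O ord (orthSum (normGram π T S f) (-normGram π T S f))
      ![0, 2 * e, A, A'] ![1, 0, 3, 2] := by
  have hβ : π ^ f * T / 2 ∈ O := by
    by_cases hT0 : T = 0
    · rw [hT0, mul_zero, zero_div]; exact O.zero_mem
    obtain ⟨hne, hord⟩ := hF.ord_pow_mul hπ hT0 f
    refine hF.mem_of_ordGE le_rfl (.inr ?_)
    rw [hF.ord_div hne hF.two_ne_zero, hord, he]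
    have := hT.resolve_left hT0
    omega
  obtain ⟨ht, htA⟩ := normGram_det hF he hπ (f := f) hD
  exact ⟨_, equivO_shapeA hF hβ, isReducedForm_shapeA hF he ht (by omega) heA hA'⟩

lemma hasReducedForm_shapeB (hD : T ^ 2 - 4 * S ≠ 0) {h H : ℕ} {j : ℤ} (hT : T ≠ 0)
    (hTh : f + ord T = h) (hS : OrdGE ord S j) (hh : 1 ≤ h) (hhe : h < 2 * e)
    (hj : h ≤ 2 * f + j) (hj' : 3 * h < 2 * e + 2 * (2 * f + j)) (hH : H = 2 * h) :
    HasReducedForm O ord (orthSum (normGram π T S f) (-normGram π T S f))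
      ![0, h, h, H] ![3, 2, 1, 0] := by
  obtain ⟨hβ, hβh⟩ := hF.ord_pow_mul hπ hT f
  have h2β : 2 * (π ^ f * T / 2) = π ^ f * T := mul_div_cancel₀ _ hF.two_ne_zero
  have hβO : 2 * (π ^ f * T / 2) ∈ O := hF.mem_of_ordGE le_rfl (.inr (by rw [h2β, hβh]; omega))
  obtain ⟨hdet, -⟩ := normGram_det hF he hπ (f := f) hD
  exact ⟨_, equivO_shapeB hF hβO, isReducedForm_shapeB hF he (by rwa [h2β]) (by rw [h2β]; omega)
    hh hhe (hF.ordGE_pow_mul hπ hS (2 * f)) (by push_cast; omega) (by push_cast; omega) hH hdet⟩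

lemma hasReducedForm_shapeC_14_23 (hD : T ^ 2 - 4 * S ≠ 0) {h x y H : ℕ} (hT : T ≠ 0)
    (hTh : f + ord T = h) (hS : S ≠ 0) (hSx : 2 * f + ord S = x) (hxy : x ≤ y) (hx : x % 2 = 1)
    (hy : y % 2 = 1) (hye : y < 2 * e) (hxyh : x + y = 2 * h) (hH : H = x + y) :
    HasReducedForm O ord (orthSum (normGram π T S f) (-normGram π T S f))
      ![0, x, y, H] ![3, 2, 1, 0] := by
  obtain ⟨hβ, hβh⟩ := hF.ord_pow_mul hπ hT f
  obtain ⟨hs, hsx⟩ := hF.ord_pow_mul hπ hS (2 * f)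
  have h2β : 2 * (π ^ f * T / 2) = π ^ f * T := mul_div_cancel₀ _ hF.two_ne_zero
  have hβO : 2 * (π ^ f * T / 2) ∈ O := hF.mem_of_ordGE le_rfl (.inr (by rw [h2β, hβh]; omega))
  obtain ⟨hdet, -⟩ := normGram_det hF he hπ (f := f) hD
  exact ⟨_, equivO_shapeC hF hβO, isReducedForm_shapeC_14_23 hF he (by rwa [h2β])
    (by rw [h2β]; omega) hs (by push_cast at hsx; omega) hxy hx hy hye hxyh hH hdet⟩

lemma hasReducedForm_shapeC_13_24 (hD : T ^ 2 - 4 * S ≠ 0) {H : ℕ} (hT : OrdGE ord T (e + 1))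
    (hS : S ≠ 0) (hS1 : ord S = 1) (hfe : f < e) (hH : H = 2 * e + 2 * f + 1) :
    HasReducedForm O ord (orthSum (normGram π T S f) (-normGram π T S f))
      ![0, 2 * f + 1, 2 * e, H] ![2, 3, 0, 1] := by
  obtain ⟨hs, hsx⟩ := hF.ord_pow_mul hπ hS (2 * f)
  have h2β : 2 * (π ^ f * T / 2) = π ^ f * T := mul_div_cancel₀ _ hF.two_ne_zero
  have hβ : OrdGE ord (2 * (π ^ f * T / 2)) (e + f + 1) := by
    rw [h2β]; exact (hF.ordGE_pow_mul hπ hT f).mono (by omega)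
  obtain ⟨hdet, -⟩ := normGram_det hF he hπ (f := f) hD
  exact ⟨_, equivO_shapeC hF (hF.mem_of_ordGE (by omega) hβ),
    isReducedForm_shapeC_13_24 hF he hβ hs (by push_cast at hsx; omega) hfe hH hdet⟩

lemma unramified_cases (hD : T ^ 2 - 4 * S ≠ 0) (hT : T ≠ 0 ∧ ord T = 0) (hS : S ∈ O)
    (hD0 : ord (T ^ 2 - 4 * S) = 0) :
    (f = 0 → HasReducedForm O ord (orthSum (normGram π T S f) (-normGram π T S f))
      ![0, 0, 0, 0] ![1, 0, 3, 2]) ∧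
    (0 < f → f < 2 * e → HasReducedForm O ord (orthSum (normGram π T S f) (-normGram π T S f))
      ![0, f, f, 2 * f] ![3, 2, 1, 0]) ∧
    (2 * e ≤ f → HasReducedForm O ord (orthSum (normGram π T S f) (-normGram π T S f))
      ![0, 2 * e, 2 * f - 2 * e, 2 * f] ![1, 0, 3, 2]) := by
  refine ⟨fun hf => ?_, fun hf hfe => ?_, fun hf => ?_⟩
  · subst hf
    exact hasReducedForm_shapeD hF hT hS hD hD0
  · exact hasReducedForm_shapeB hF he hπ hD hT.1 (by rw [hT.2, add_zero]) (hF.ordGE_of_mem hS)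
      hf hfe (by omega) (by omega) rfl
  · exact hasReducedForm_shapeA hF he hπ hD (.inr hT.2.ge) (by omega) (by rw [hD0]; omega)
      (by omega) (by omega)

lemma ramified_even_cases (hD : T ^ 2 - 4 * S ≠ 0) {g : ℕ} (hg : 0 < g) (hge : g ≤ e)
    (hDg : ord (T ^ 2 - 4 * S) = 2 * g) (hTg : OrdGE ord T g)
    (hshift : ∃ m ∈ O, (m * m - m * T + S ≠ 0 ∧ ord (m * m - m * T + S) = 1) ∧
      (T - 2 * m ≠ 0 ∧ ord (T - 2 * m) = g)) :
    (f ≤ g - 1 → HasReducedForm O ord (orthSum (normGram π T S f) (-normGram π T S f))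
      ![0, 2 * f + 1, 2 * g - 1, 2 * g + 2 * f] ![3, 2, 1, 0]) ∧
    (g ≤ f → f < 2 * e - g → HasReducedForm O ord
      (orthSum (normGram π T S f) (-normGram π T S f))
      ![0, g + f, g + f, 2 * g + 2 * f] ![3, 2, 1, 0]) ∧
    (2 * e - g ≤ f → HasReducedForm O ord (orthSum (normGram π T S f) (-normGram π T S f))
      ![0, 2 * e, 2 * g + 2 * f - 2 * e, 2 * g + 2 * f] ![1, 0, 3, 2]) := by
  obtain ⟨m, hm, ⟨hS', hS'1⟩, hT', hT'g⟩ := hshift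
  have hπO : π ∈ O := hF.mem_of_ordGE le_rfl (.inr (by rw [hπ.2]; norm_num))
  have hD' : (T - 2 * m) ^ 2 - 4 * (m * m - m * T + S) ≠ 0 := by
    rwa [show (T - 2 * m) ^ 2 - 4 * (m * m - m * T + S) = T ^ 2 - 4 * S by ring]
  refine ⟨fun hf => ?_, fun hf hfe => ?_, fun hf => ?_⟩
  · exact hasReducedForm_of_shift hF hπO hm (hasReducedForm_shapeC_14_23 hF he hπ hD' hT'
      (h := f + g) (by rw [hT'g]; push_cast; ring) hS' (by rw [hS'1]; push_cast; ring)
      (by omega) (by omega) (by omega) (by omega) (by omega) (by omega))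
  · exact hasReducedForm_of_shift hF hπO hm (hasReducedForm_shapeB hF he hπ hD' hT'
      (by rw [hT'g]; push_cast; ring) (.inr hS'1.ge) (by omega) (by omega) (by omega)
      (by omega) (by omega))
  · exact hasReducedForm_shapeA hF he hπ hD hTg (by omega) (by rw [hDg]; omega) (by omega)
      (by omega)

lemma ramified_odd_cases (hD : T ^ 2 - 4 * S ≠ 0) (hDe : ord (T ^ 2 - 4 * S) = 2 * e + 1)
    (hTe : OrdGE ord T e)
    (hshift : ∃ m ∈ O, (m * m - m * T + S ≠ 0 ∧ ord (m * m - m * T + S) = 1) ∧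
      OrdGE ord (T - 2 * m) (e + 1)) :
    (f < e → HasReducedForm O ord (orthSum (normGram π T S f) (-normGram π T S f))
      ![0, 2 * f + 1, 2 * e, 2 * e + 2 * f + 1] ![2, 3, 0, 1]) ∧
    (e ≤ f → HasReducedForm O ord (orthSum (normGram π T S f) (-normGram π T S f))
      ![0, 2 * e, 2 * f + 1, 2 * e + 2 * f + 1] ![1, 0, 3, 2]) := by
  obtain ⟨m, hm, ⟨hS', hS'1⟩, hT'⟩ := hshift
  have hπO : π ∈ O := hF.mem_of_ordGE le_rfl (.inr (by rw [hπ.2]; norm_num))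
  have hD' : (T - 2 * m) ^ 2 - 4 * (m * m - m * T + S) ≠ 0 := by
    rwa [show (T - 2 * m) ^ 2 - 4 * (m * m - m * T + S) = T ^ 2 - 4 * S by ring]
  refine ⟨fun hf => ?_, fun hf => ?_⟩
  · exact hasReducedForm_of_shift hF hπO hm
      (hasReducedForm_shapeC_13_24 hF he hπ hD' hT' hS' hS'1 hf rfl)
  · exact hasReducedForm_shapeA hF he hπ hD hTe (by omega) (by rw [hDe]; omega) (by omega)
      (by omega)

end NormGram

/-- `L ⊕ -L` is equivalent to an explicit reduced form of GK type
`(a, σ)`, for `L = (𝔬_{E,f}, 𝒩)`. -/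
theorem statement15 {F : Type} [Field F] (O : Subring F) (ord : F → ℤ) (q e : ℕ)
    (hF : LocalFieldAxioms O ord 2 q) (he : ord (2 : F) = e)
    (π : F) (hπ : π ≠ 0 ∧ ord π = 1)
    (E : Type) [CommRing E] [Algebra F E] (ω : E) (d : ℕ) (ξ : ℤ)
    (hE : QuadAlgebraAxioms O ord E ω d ξ)
    (f : ℕ)
    (G : Matrix (Fin 2) (Fin 2) F)
    (hG : G = normGram π (Algebra.trace F E ω) (Algebra.norm F ω) f) :
    (d = 0 →
      (f = 0 → ∃ B', EquivO O ord (orthSum G (-G)) B' ∧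
        IsReducedForm O ord B' ![0, 0, 0, 0] ![1, 0, 3, 2]) ∧
      (0 < f → f < 2 * e → ∃ B', EquivO O ord (orthSum G (-G)) B' ∧
        IsReducedForm O ord B' ![0, f, f, 2 * f] ![3, 2, 1, 0]) ∧
      (2 * e ≤ f → ∃ B', EquivO O ord (orthSum G (-G)) B' ∧
        IsReducedForm O ord B' ![0, 2 * e, 2 * f - 2 * e, 2 * f] ![1, 0, 3, 2])) ∧
    (∀ g : ℕ, d = 2 * g → 0 < g → g ≤ e →
      (f ≤ g - 1 → ∃ B', EquivO O ord (orthSum G (-G)) B' ∧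
        IsReducedForm O ord B' ![0, 2 * f + 1, 2 * g - 1, 2 * g + 2 * f] ![3, 2, 1, 0]) ∧
      (g ≤ f → f < 2 * e - g → ∃ B', EquivO O ord (orthSum G (-G)) B' ∧
        IsReducedForm O ord B' ![0, g + f, g + f, 2 * g + 2 * f] ![3, 2, 1, 0]) ∧
      (2 * e - g ≤ f → ∃ B', EquivO O ord (orthSum G (-G)) B' ∧
        IsReducedForm O ord B'
          ![0, 2 * e, 2 * g + 2 * f - 2 * e, 2 * g + 2 * f] ![1, 0, 3, 2])) ∧
    (d = 2 * e + 1 →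
      (f < e → ∃ B', EquivO O ord (orthSum G (-G)) B' ∧
        IsReducedForm O ord B'
          ![0, 2 * f + 1, 2 * e, 2 * e + 2 * f + 1] ![2, 3, 0, 1]) ∧
      (e ≤ f → ∃ B', EquivO O ord (orthSum G (-G)) B' ∧
        IsReducedForm O ord B'
          ![0, 2 * e, 2 * f + 1, 2 * e + 2 * f + 1] ![1, 0, 3, 2])) := by
  subst hG
  have hD := hE.disc_ne
  refine ⟨fun hd => ?_, fun g hd hg hge => ?_, fun hd => ?_⟩
  · exact unramified_cases hF he hπ hD (hE.trace_ne_zero_of_unramified hF hd) hE.norm_mem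
      (by rw [hE.disc_ord, hd]; rfl)
  · exact ramified_even_cases hF he hπ hD hg hge (by rw [hE.disc_ord, hd]; push_cast; ring)
      (hE.ordGE_trace hF (by omega) (by omega)) (hE.exists_shift_of_even hF hπ hg (by omega) hd)
  · have hshift := hE.exists_shift_of_odd hF hπ (by rw [hd, he]; push_cast; ring)
    rw [he] at hshift
    exact ramified_odd_cases hF he hπ hD (by rw [hE.disc_ord, hd]; push_cast; ring)
      (hE.ordGE_trace hF (by omega) (by omega)) hshift

end GK
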